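/- Let p be a monic polynomial of degree d with only nonnegative real roots, with root multiset Λ, and let k be the number of zeros in Λ. For each n ≥ 1 let λ_1^(n) ≥ ... ≥ λ_d^(n) be the nonnegative real roots of p^{⊠_d n}. Then for every 1 ≤ i ≤ d−k and every n ≥ 1, binom(d,i−1)^{-1/n} · ẽ_i(Λ)/ẽ_{i−1}(Λ) ≤ (λ_i^(n))^{1/n} ≤ binom(d,i)^{1/n} · ẽ_i(Λ)/ẽ_{i−1}(Λ). -/

import Mathlib

open Polynomial Filter

/-- Finite free multiplicative convolution of two polynomials of degree `d`:
for `p(x) = Σ (-1)^i p_i x^{d-i}` and `q(x) = Σ (-1)^i q_i x^{d-i}`,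
`(p ⊠_d q)(x) = Σ (-1)^i (p_i q_i / binom(d,i)) x^{d-i}`. -/
noncomputable def ffmul (d : ℕ) (p q : Polynomial ℝ) : Polynomial ℝ :=
  ∑ i ∈ Finset.range (d + 1),
    Polynomial.C ((-1 : ℝ) ^ i * p.coeff (d - i) * q.coeff (d - i) / (d.choose i : ℝ)) *
      Polynomial.X ^ (d - i)

/-- `ffmulPow d p n` is the `n`-th finite free multiplicative convolution power `p^{⊠_d n}`
(for `n ≥ 1`); the convolution identity `(x-1)^d` is used as the 0-th power. -/
noncomputable def ffmulPow (d : ℕ) (p : Polynomial ℝ) : ℕ → Polynomial ℝ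
  | 0 => (Polynomial.X - 1) ^ d
  | n + 1 => ffmul d p (ffmulPow d p n)

/-- Normalized elementary symmetric function `ẽ_i(Λ) = e_i(Λ) / binom(d,i)`. -/
noncomputable def etilde (d i : ℕ) (Λ : Multiset ℝ) : ℝ :=
  Λ.esymm i / (d.choose i : ℝ)

/-!
Each step of `⊠_d` multiplies the `j`-th coefficient of a power of `p` by
`(-1)^j e_j(Λ) / binom(d,j)`, so the roots of `p^{⊠_d n}` satisfy `ẽ_j = ẽ_j(Λ)^n`.
For sorted nonnegative roots `λ_1 ≥ ⋯ ≥ λ_d`, the product `λ_1 ⋯ λ_j` is one of the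
`binom(d,j)` terms of `e_j` and dominates all of them, so it lies between `ẽ_j^n` and
`binom(d,j) ẽ_j^n`. Dividing the bounds for `j = i` and `j = i - 1` bounds `λ_i` (here
`ẽ_{i-1}(Λ) > 0` because `Λ` has `d - k ≥ i` positive elements), and taking `n`-th roots
gives the claim.
-/

open Finset

namespace Multiset

variable {α : Type*} [DecidableEq α]

lemma card_filter_ne (s : Multiset α) (a : α) :
    card (s.filter (· ≠ a)) = card s - s.count a := by
  have h := congrArg card (filter_add_not (· = a) s)
  simp only [card_add, filter_eq', card_replicate, ← ne_eq] at h
  omega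

lemma esymm_pos {R : Type*} [CommSemiring R] [PartialOrder R] [IsStrictOrderedRing R]
    [DecidableEq R] {s : Multiset R} (hs : ∀ x ∈ s, 0 ≤ x) {j : ℕ}
    (hj : j ≤ card s - s.count 0) : 0 < s.esymm j := by
  obtain ⟨t, ht⟩ : ∃ t, t ∈ (s.filter (· ≠ 0)).powersetCard j :=
    card_pos_iff_exists_mem.1 (by rw [card_powersetCard, card_filter_ne]; exact Nat.choose_pos hj)
  rw [mem_powersetCard] at ht
  have hts : t ≤ s := ht.1.trans (filter_le _ _)
  have ht_pos : 0 < t.prod := prod_pos fun x hx =>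
    lt_of_le_of_ne (hs x (mem_of_le hts hx)) (of_mem_filter (mem_of_le ht.1 hx)).symm
  refine ht_pos.trans_le (single_le_sum ?_ _ (mem_map_of_mem _ (mem_powersetCard.2 ⟨hts, ht.2⟩)))
  simp only [mem_map, mem_powersetCard]
  rintro _ ⟨u, ⟨hu, -⟩, rfl⟩
  exact prod_nonneg fun x hx => hs x (mem_of_le hu hx)

end Multiset

lemma etilde_pos {d j : ℕ} {Λ : Multiset ℝ} (hΛ : ∀ x ∈ Λ, 0 ≤ x)
    (hj : j ≤ Multiset.card Λ - Λ.count 0) (hjd : j ≤ d) : 0 < etilde d j Λ :=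
  div_pos (Multiset.esymm_pos hΛ hj) (Nat.cast_pos.2 (Nat.choose_pos hjd))

section Antitone

variable {R : Type*} [CommSemiring R] [PartialOrder R] [IsOrderedRing R]
  {f : ℕ → R} {d : ℕ}

lemma Finset.prod_le_prod_Icc_card_of_antitoneOn (hf : AntitoneOn f (Set.Icc 1 d))
    (hf0 : ∀ a ∈ Set.Icc 1 d, 0 ≤ f a) {t : Finset ℕ} (ht : t ⊆ Icc 1 d) :
    ∏ a ∈ t, f a ≤ ∏ a ∈ Icc 1 #t, f a := by
  induction t using Finset.induction_on_max with
  | empty => simp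
  | insert a s hlt ih =>
    have has : a ∉ s := fun h => (hlt a h).false
    have hs : s ⊆ Icc 1 d := (subset_insert a s).trans ht
    obtain ⟨ha1, had⟩ := mem_Icc.1 (ht (mem_insert_self a s))
    have hsa : #s + 1 ≤ a := by
      have := card_le_card fun x hx => mem_Ico.2 ⟨(mem_Icc.1 (hs hx)).1, hlt x hx⟩
      rw [Nat.card_Ico] at this
      omega
    rw [prod_insert has, card_insert_of_notMem has, prod_Icc_succ_top (by omega), mul_comm (f a)]
    refine mul_le_mul (ih hs) (hf ⟨by omega, by omega⟩ ⟨ha1, had⟩ hsa) (hf0 a ⟨ha1, had⟩)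
      (prod_nonneg fun x hx => hf0 x ?_)
    simp only [mem_Icc] at hx
    exact ⟨hx.1, by omega⟩

lemma prod_Icc_le_esymm (hf0 : ∀ a ∈ Set.Icc 1 d, 0 ≤ f a) {j : ℕ} (hj : j ≤ d) :
    ∏ a ∈ Icc 1 j, f a ≤ ((Icc 1 d).val.map f).esymm j := by
  rw [Finset.esymm_map_val]
  refine single_le_sum (f := fun t => ∏ a ∈ t, f a) (fun t ht => prod_nonneg fun a ha => ?_)
    (mem_powersetCard.2 ⟨Icc_subset_Icc_right hj, by simp⟩)
  exact hf0 a (by simpa using (mem_powersetCard.1 ht).1 ha)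

lemma esymm_le_choose_mul_prod_Icc (hf : AntitoneOn f (Set.Icc 1 d))
    (hf0 : ∀ a ∈ Set.Icc 1 d, 0 ≤ f a) (j : ℕ) :
    ((Icc 1 d).val.map f).esymm j ≤ d.choose j * ∏ a ∈ Icc 1 j, f a := by
  rw [Finset.esymm_map_val]
  calc _ ≤ #((Icc 1 d).powersetCard j) • ∏ a ∈ Icc 1 j, f a :=
        sum_le_card_nsmul _ _ _ fun t ht => by
          obtain ⟨hsub, rfl⟩ := mem_powersetCard.1 ht
          exact prod_le_prod_Icc_card_of_antitoneOn hf hf0 hsub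
    _ = d.choose j * ∏ a ∈ Icc 1 j, f a := by simp [nsmul_eq_mul]

end Antitone

lemma AntitoneOn.div_le_and_le_div_of_esymm_eq {R : Type*} [Field R] [LinearOrder R]
    [IsStrictOrderedRing R]
    {f : ℕ → R} {d : ℕ} (hf : AntitoneOn f (Set.Icc 1 d)) (hf0 : ∀ a ∈ Set.Icc 1 d, 0 ≤ f a)
    {c : ℕ → R} (hc : ∀ j ≤ d, ((Icc 1 d).val.map f).esymm j = d.choose j * c j)
    {i : ℕ} (hi : i + 1 ≤ d) (hci : 0 < c i) :
    c (i + 1) / (d.choose i * c i) ≤ f (i + 1) ∧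
      f (i + 1) ≤ d.choose (i + 1) * c (i + 1) / c i := by
  have hchoose : ∀ j ≤ d, (0 : R) < d.choose j := fun j hj => Nat.cast_pos.2 (Nat.choose_pos hj)
  have hlow : ∀ j ≤ d, c j ≤ ∏ a ∈ Icc 1 j, f a := fun j hj =>
    le_of_mul_le_mul_left ((hc j hj).symm.trans_le (esymm_le_choose_mul_prod_Icc hf hf0 j))
      (hchoose j hj)
  have hhigh : ∀ j ≤ d, ∏ a ∈ Icc 1 j, f a ≤ d.choose j * c j := fun j hj =>
    (prod_Icc_le_esymm hf0 hj).trans_eq (hc j hj)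
  have hsplit := prod_Icc_succ_top (Nat.le_add_left 1 i) f
  have hfi : 0 ≤ f (i + 1) := hf0 _ ⟨by omega, hi⟩
  constructor
  · rw [div_le_iff₀ (mul_pos (hchoose i (by omega)) hci)]
    calc c (i + 1) ≤ (∏ a ∈ Icc 1 i, f a) * f (i + 1) := hsplit ▸ hlow (i + 1) hi
      _ ≤ d.choose i * c i * f (i + 1) := by gcongr; exact hhigh i (by omega)
      _ = _ := mul_comm _ _
  · rw [le_div_iff₀ hci]
    calc f (i + 1) * c i ≤ (∏ a ∈ Icc 1 i, f a) * f (i + 1) := by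
          rw [mul_comm]; gcongr; exact hlow i (by omega)
      _ ≤ d.choose (i + 1) * c (i + 1) := hsplit ▸ hhigh (i + 1) hi

lemma coeff_prod_X_sub_C_card_sub {R : Type*} [CommRing R] (Λ : Multiset R) {j : ℕ}
    (hj : j ≤ Multiset.card Λ) :
    (Λ.map fun r => X - C r).prod.coeff (Multiset.card Λ - j) = (-1) ^ j * Λ.esymm j := by
  rw [Multiset.prod_X_sub_C_coeff Λ (Nat.sub_le _ _), Nat.sub_sub_self hj]

lemma coeff_ffmul_sub {d j : ℕ} (hj : j ≤ d) (p q : ℝ[X]) :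
    (ffmul d p q).coeff (d - j) = (-1) ^ j * p.coeff (d - j) * q.coeff (d - j) / d.choose j := by
  rw [ffmul, finsetSum_coeff, sum_eq_single_of_mem j (mem_range.2 (by omega))]
  · rw [coeff_C_mul_X_pow, if_pos rfl]
  · intro i hi hij
    rw [coeff_C_mul_X_pow, if_neg (by rw [mem_range] at hi; omega)]

lemma coeff_ffmulPow_sub {Λ : Multiset ℝ} {d j : ℕ} (hcard : Multiset.card Λ = d) (hj : j ≤ d)
    (n : ℕ) :
    (ffmulPow d (Λ.map fun r => X - C r).prod n).coeff (d - j)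
      = (-1) ^ j * d.choose j * etilde d j Λ ^ n := by
  have hchoose : (d.choose j : ℝ) ≠ 0 := Nat.cast_ne_zero.2 (Nat.choose_pos hj).ne'
  induction n with
  | zero =>
    rw [ffmulPow, sub_eq_add_neg, ← C_1, ← C_neg, coeff_X_add_C_pow, Nat.sub_sub_self hj,
      Nat.choose_symm hj, pow_zero, mul_one]
  | succ n ih =>
    rw [ffmulPow, coeff_ffmul_sub hj, ih, ← hcard, coeff_prod_X_sub_C_card_sub Λ (hcard ▸ hj),
      hcard, ← mul_div_cancel₀ (Λ.esymm j) hchoose, ← etilde]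
    have hsign : ((-1 : ℝ) ^ j) ^ 2 = 1 := by
      rw [pow_right_comm, neg_one_sq, one_pow]
    field_simp
    rw [hsign, one_mul, pow_succ']

lemma esymm_eq_of_ffmulPow_eq {Λ M : Multiset ℝ} {d n : ℕ} (hΛ : Multiset.card Λ = d)
    (hM : Multiset.card M = d)
    (h : ffmulPow d (Λ.map fun r => X - C r).prod n = (M.map fun r => X - C r).prod)
    {j : ℕ} (hj : j ≤ d) : M.esymm j = d.choose j * etilde d j Λ ^ n := by
  have hcoeff := coeff_prod_X_sub_C_card_sub M (hM ▸ hj)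
  have := coeff_ffmulPow_sub hΛ hj n
  rw [hM] at hcoeff
  rw [h, hcoeff, mul_assoc] at this
  exact mul_left_cancel₀ (pow_ne_zero j (neg_ne_zero.2 one_ne_zero)) this

lemma Real.mul_pow_rpow_one_div {x y : ℝ} (hx : 0 ≤ x) (hy : 0 ≤ y) {n : ℕ} (hn : n ≠ 0) :
    (x * y ^ n) ^ (1 / (n : ℝ)) = x ^ (1 / (n : ℝ)) * y := by
  rw [Real.mul_rpow hx (by positivity), one_div, Real.pow_rpow_inv_natCast hy hn]

lemma Real.inv_rpow_mul_div_le_rpow_one_div {C a b x : ℝ} {n : ℕ} (hC : 0 < C) (ha : 0 ≤ a)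
    (hb : 0 < b) (hn : n ≠ 0) (h : a ^ n / (C * b ^ n) ≤ x) :
    C ^ (-(1 / (n : ℝ))) * (a / b) ≤ x ^ (1 / (n : ℝ)) := by
  calc C ^ (-(1 / (n : ℝ))) * (a / b) = (C⁻¹ * (a / b) ^ n) ^ (1 / (n : ℝ)) := by
        rw [mul_pow_rpow_one_div (by positivity) (by positivity) hn, inv_rpow hC.le,
          rpow_neg hC.le]
    _ = (a ^ n / (C * b ^ n)) ^ (1 / (n : ℝ)) := by
        congr 1
        ring
    _ ≤ x ^ (1 / (n : ℝ)) := rpow_le_rpow (by positivity) h (by positivity)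

lemma Real.rpow_one_div_le_rpow_mul_div {C a b x : ℝ} {n : ℕ} (hC : 0 ≤ C) (ha : 0 ≤ a)
    (hb : 0 ≤ b) (hn : n ≠ 0) (hx : 0 ≤ x) (h : x ≤ C * a ^ n / b ^ n) :
    x ^ (1 / (n : ℝ)) ≤ C ^ (1 / (n : ℝ)) * (a / b) := by
  calc x ^ (1 / (n : ℝ)) ≤ (C * a ^ n / b ^ n) ^ (1 / (n : ℝ)) :=
        rpow_le_rpow hx h (by positivity)
    _ = C ^ (1 / (n : ℝ)) * (a / b) := by
        rw [mul_div_assoc, ← div_pow, mul_pow_rpow_one_div hC (by positivity) hn]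

/-- explicit bounds
`binom(d,i-1)^{-1/n} ẽ_i/ẽ_{i-1} ≤ (λ_i^(n))^{1/n} ≤ binom(d,i)^{1/n} ẽ_i/ẽ_{i-1}`. -/
theorem root_rpow_bounds (d k : ℕ) (p : Polynomial ℝ) (Λ : Multiset ℝ) (lam : ℕ → ℕ → ℝ)
    (hcard : Multiset.card Λ = d) (hnonneg : ∀ x ∈ Λ, (0 : ℝ) ≤ x)
    (hp : p = (Λ.map fun r => Polynomial.X - Polynomial.C r).prod)
    (hk : Λ.count 0 = k)
    (hroots : ∀ n, 1 ≤ n → ffmulPow d p n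
        = ∏ i ∈ Finset.Icc 1 d, (Polynomial.X - Polynomial.C (lam n i)))
    (hmono : ∀ n, 1 ≤ n → ∀ i j, 1 ≤ i → i ≤ j → j ≤ d → lam n j ≤ lam n i)
    (hnneg : ∀ n, 1 ≤ n → ∀ i, 1 ≤ i → i ≤ d → 0 ≤ lam n i) :
    ∀ i, 1 ≤ i → i ≤ d - k → ∀ n : ℕ, 1 ≤ n →
      (d.choose (i - 1) : ℝ) ^ (-(1 / (n : ℝ))) * (etilde d i Λ / etilde d (i - 1) Λ)
          ≤ (lam n i) ^ (1 / (n : ℝ)) ∧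
        (lam n i) ^ (1 / (n : ℝ))
          ≤ (d.choose i : ℝ) ^ (1 / (n : ℝ)) * (etilde d i Λ / etilde d (i - 1) Λ) := by
  intro i hi hik n hn
  obtain ⟨i, rfl⟩ : ∃ i', i = i' + 1 := ⟨i - 1, by omega⟩
  subst hp hk
  rw [Nat.add_sub_cancel]
  have hid : i + 1 ≤ d := hik.trans (Nat.sub_le d _)
  have ha : 0 < etilde d (i + 1) Λ := etilde_pos hnonneg (by omega) hid
  have hb : 0 < etilde d i Λ := etilde_pos hnonneg (by omega) (by omega)
  have hroots_map : ffmulPow d (Λ.map fun r => X - C r).prod n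
      = (((Icc 1 d).val.map (lam n)).map fun r => X - C r).prod := by
    rw [hroots n hn, Multiset.map_map, prod_map_val]
    rfl
  have hanti : AntitoneOn (lam n) (Set.Icc 1 d) := fun a ha b hb hab => hmono n hn a b ha.1 hab hb.2
  obtain ⟨hlow, hhigh⟩ := hanti.div_le_and_le_div_of_esymm_eq (c := (etilde d · Λ ^ n))
    (fun a ha => hnneg n hn a ha.1 ha.2)
    (fun j hj => esymm_eq_of_ffmulPow_eq hcard (by simp) hroots_map hj) hid (pow_pos hb n)
  have hchoose : (0 : ℝ) < d.choose i := Nat.cast_pos.2 (Nat.choose_pos (by omega))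
  exact ⟨Real.inv_rpow_mul_div_le_rpow_one_div hchoose ha.le hb (by omega) hlow,
    Real.rpow_one_div_le_rpow_mul_div (by positivity) ha.le hb.le (by omega)
      (hnneg n hn _ (by omega) hid) hhigh⟩
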